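/- arXiv:2006.03860 — 2 statements merged into one kernel-verified Lean document; each statement's English description precedes it below -/
import Mathlib

section
/- Let M : ℝ^r → ℝ^r satisfy ‖M(x)‖ ≤ a‖x‖ + b for all x, with 0 < a < 1 and b ∈ ℝ. Let e be a random vector with E‖e‖^κ < ∞ for some κ ≥ 2. Define ψ(x) = 1 + ‖x‖^κ. Then there exist ε ∈ (0,1), L > 0, and M₀ < ∞ such that E[ψ(M(x) + e)] ≤ (1 - ε)ψ(x) whenever ‖x‖ > L, and E[ψ(M(x) + e)] ≤ M₀ whenever ‖x‖ ≤ L. -/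
/-!
Split the noise off with the elementary bound `(u + v)^κ ≤ (u/t)^κ + (v/(1-t))^κ`: taking
`t = (1 + a)/2` gives `‖M x + e‖^κ ≤ ρ ‖x‖^κ + K + C ‖e‖^κ` with `ρ = (2a/(1+a))^κ < 1` and
constants `K, C`, so `E ψ(M x + e) ≤ 1 + ρ ‖x‖^κ + D`. Then `ε = (1 - ρ)/2` gives the drift as
soon as `‖x‖^κ` dominates `D`.
-/

open MeasureTheory

lemma add_rpow_le_div_rpow_add_div_rpow {u v t κ : ℝ} (hu : 0 ≤ u) (hv : 0 ≤ v)
    (ht0 : 0 < t) (ht1 : t < 1) (hκ : 0 ≤ κ) :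
    (u + v) ^ κ ≤ (u / t) ^ κ + (v / (1 - t)) ^ κ := by
  -- `t (u + v) ≤ u` or `(1 - t) (u + v) ≤ v`, as the two sides add up to the same sum
  rcases le_total (t * (u + v)) u with h | h
  · have hle : u + v ≤ u / t := by rw [le_div_iff₀ ht0]; linarith
    calc (u + v) ^ κ ≤ (u / t) ^ κ := by gcongr
      _ ≤ _ := le_add_of_nonneg_right (by positivity)
  · have hle : u + v ≤ v / (1 - t) := by rw [le_div_iff₀ (by linarith)]; linarith
    calc (u + v) ^ κ ≤ (v / (1 - t)) ^ κ := by gcongr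
      _ ≤ _ := le_add_of_nonneg_left (by positivity)

lemma rpow_norm_add_le_of_norm_le {E : Type*} [SeminormedAddCommGroup E] {a b s κ : ℝ}
    (ha0 : 0 ≤ a) (ha1 : a < 1) (hs : 0 ≤ s) (hκ : 0 ≤ κ) {y z : E}
    (hy : ‖y‖ ≤ a * s + b) :
    ‖y + z‖ ^ κ ≤ (2 * a / (1 + a)) ^ κ * s ^ κ + (4 * max b 0 / (1 - a)) ^ κ
      + (4 / (1 - a)) ^ κ * ‖z‖ ^ κ := by
  have h1a : 0 < 1 - a := by linarith
  set b' := max b 0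
  have hb' : 0 ≤ b' := le_max_right b 0
  have hnorm : ‖y + z‖ ≤ a * s + (b' + ‖z‖) := by
    linarith [norm_add_le y z, le_max_left b 0]
  calc ‖y + z‖ ^ κ ≤ (a * s + (b' + ‖z‖)) ^ κ := by gcongr
    _ ≤ (a * s / ((1 + a) / 2)) ^ κ + ((b' + ‖z‖) / (1 - (1 + a) / 2)) ^ κ :=
        add_rpow_le_div_rpow_add_div_rpow (by positivity) (by positivity) (by linarith)
          (by linarith) hκ
    _ = (2 * a / (1 + a) * s) ^ κ + (2 * b' / (1 - a) + 2 * ‖z‖ / (1 - a)) ^ κ := by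
        rw [show 1 - (1 + a) / 2 = (1 - a) / 2 by ring]
        congr 2 <;> field_simp
    _ ≤ (2 * a / (1 + a) * s) ^ κ + ((2 * b' / (1 - a) / (1 / 2)) ^ κ
          + (2 * ‖z‖ / (1 - a) / (1 - 1 / 2)) ^ κ) := by
        gcongr
        exact add_rpow_le_div_rpow_add_div_rpow (by positivity) (by positivity) (by norm_num)
          (by norm_num) hκ
    _ = _ := by
        rw [Real.mul_rpow (by positivity) hs, ← Real.mul_rpow (by positivity) (norm_nonneg z)]
        ring_nf

lemma integral_le_add_mul_integral_of_le {Ω : Type*} [MeasurableSpace Ω] {μ : Measure Ω}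
    [IsProbabilityMeasure μ] {f g : Ω → ℝ} {c C : ℝ} (hf : 0 ≤ f) (hg : Integrable g μ)
    (hfg : ∀ ω, f ω ≤ c + C * g ω) :
    ∫ ω, f ω ∂μ ≤ c + C * ∫ ω, g ω ∂μ := by
  calc ∫ ω, f ω ∂μ ≤ ∫ ω, (c + C * g ω) ∂μ :=
        integral_mono_of_nonneg (.of_forall hf) ((integrable_const c).add (hg.const_mul C))
          (.of_forall hfg)
    _ = c + C * ∫ ω, g ω ∂μ := by
        rw [integral_add (integrable_const c) (hg.const_mul C), integral_const_mul]
        simp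

lemma exists_drift_of_le_one_add_mul_rpow {E : Type*} [SeminormedAddCommGroup E] {f : E → ℝ}
    {ρ D κ : ℝ} (hρ0 : 0 ≤ ρ) (hρ1 : ρ < 1) (hκ : 1 ≤ κ)
    (hf : ∀ x, f x ≤ 1 + ρ * ‖x‖ ^ κ + D) :
    ∃ ε : ℝ, 0 < ε ∧ ε < 1 ∧ ∃ L : ℝ, 0 < L ∧ ∃ M₀ : ℝ, ∀ x : E,
      (L < ‖x‖ → f x ≤ (1 - ε) * (1 + ‖x‖ ^ κ)) ∧ (‖x‖ ≤ L → f x ≤ M₀) := by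
  set ε := (1 - ρ) / 2
  have hε : 0 < ε := by simp only [ε]; linarith
  set L := max 1 (1 + D / ε)
  refine ⟨ε, hε, by simp only [ε]; linarith, L, by positivity, 1 + ρ * L ^ κ + D,
    fun x => ⟨fun hx => ?_, fun hx => ?_⟩⟩
  · have hx1 : 1 ≤ ‖x‖ := (le_max_left _ _).trans hx.le
    have hxD : 1 + D / ε < ‖x‖ ^ κ :=
      ((le_max_right _ _).trans_lt hx).trans_le (Real.self_le_rpow_of_one_le hx1 hκ)
    have hεD : ε + D < ε * ‖x‖ ^ κ := by
      have := (div_lt_iff₀ hε).mp (lt_sub_iff_add_lt'.mpr hxD)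
      linarith
    have hρ : ρ = 1 - 2 * ε := by simp only [ε]; ring
    calc f x ≤ 1 + ρ * ‖x‖ ^ κ + D := hf x
      _ ≤ (1 - ε) * (1 + ‖x‖ ^ κ) := by rw [hρ]; nlinarith
  · calc f x ≤ 1 + ρ * ‖x‖ ^ κ + D := hf x
      _ ≤ 1 + ρ * L ^ κ + D := by gcongr

theorem drift_criterion_general {r : ℕ} {Ω : Type*} [MeasurableSpace Ω]
    (μ : Measure Ω) [IsProbabilityMeasure μ]
    (M : (Fin r → ℝ) → (Fin r → ℝ)) (a b : ℝ) (ha0 : 0 < a) (ha1 : a < 1)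
    (hM : ∀ x, ‖M x‖ ≤ a * ‖x‖ + b)
    (e : Ω → (Fin r → ℝ))
    (κ : ℝ) (hκ : 2 ≤ κ) (hmom : Integrable (fun ω => ‖e ω‖ ^ κ) μ) :
    ∃ ε : ℝ, 0 < ε ∧ ε < 1 ∧ ∃ L : ℝ, 0 < L ∧ ∃ M₀ : ℝ, ∀ x : Fin r → ℝ,
      (L < ‖x‖ → ∫ ω, (1 + ‖M x + e ω‖ ^ κ) ∂μ ≤ (1 - ε) * (1 + ‖x‖ ^ κ)) ∧
      (‖x‖ ≤ L → ∫ ω, (1 + ‖M x + e ω‖ ^ κ) ∂μ ≤ M₀) := by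
  have hκ0 : 0 ≤ κ := by linarith
  have hρ : (2 * a / (1 + a)) ^ κ < 1 :=
    Real.rpow_lt_one (by positivity) ((div_lt_one (by linarith)).mpr (by linarith))
      (by linarith)
  refine exists_drift_of_le_one_add_mul_rpow (by positivity) hρ (by linarith)
    (D := (4 * max b 0 / (1 - a)) ^ κ + (4 / (1 - a)) ^ κ * ∫ ω, ‖e ω‖ ^ κ ∂μ) fun x => ?_
  have hpoint (ω : Ω) : 1 + ‖M x + e ω‖ ^ κ ≤
      (1 + (2 * a / (1 + a)) ^ κ * ‖x‖ ^ κ + (4 * max b 0 / (1 - a)) ^ κ)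
        + (4 / (1 - a)) ^ κ * ‖e ω‖ ^ κ := by
    linarith [rpow_norm_add_le_of_norm_le ha0.le ha1 (norm_nonneg x) hκ0 (z := e ω)
      (hM x)]
  calc ∫ ω, (1 + ‖M x + e ω‖ ^ κ) ∂μ
      ≤ (1 + (2 * a / (1 + a)) ^ κ * ‖x‖ ^ κ + (4 * max b 0 / (1 - a)) ^ κ)
        + (4 / (1 - a)) ^ κ * ∫ ω, ‖e ω‖ ^ κ ∂μ :=
        integral_le_add_mul_integral_of_le (fun ω => by positivity) hmom hpoint
    _ = _ := by ring

/-- drift criterion. If `‖M(x)‖ ≤ a‖x‖ + b` with `0 < a < 1` and the noise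
`e` has finite `κ`-th moment (`κ ≥ 2`), then the test function `ψ(x) = 1 + ‖x‖^κ`
satisfies a geometric drift condition outside a ball and is bounded on the ball. -/
theorem drift_criterion {r : ℕ} {Ω : Type*} [MeasurableSpace Ω]
    (μ : Measure Ω) [IsProbabilityMeasure μ]
    (M : (Fin r → ℝ) → (Fin r → ℝ)) (a b : ℝ) (ha0 : 0 < a) (ha1 : a < 1)
    (hM : ∀ x, ‖M x‖ ≤ a * ‖x‖ + b)
    (e : Ω → (Fin r → ℝ)) (he : Measurable e)
    (κ : ℝ) (hκ : 2 ≤ κ) (hmom : Integrable (fun ω => ‖e ω‖ ^ κ) μ) :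
    ∃ ε : ℝ, 0 < ε ∧ ε < 1 ∧ ∃ L : ℝ, 0 < L ∧ ∃ M₀ : ℝ, ∀ x : Fin r → ℝ,
      (L < ‖x‖ → ∫ ω, (1 + ‖M x + e ω‖ ^ κ) ∂μ ≤ (1 - ε) * (1 + ‖x‖ ^ κ)) ∧
      (‖x‖ ≤ L → ∫ ω, (1 + ‖M x + e ω‖ ^ κ) ∂μ ≤ M₀) :=
  drift_criterion_general μ M a b ha0 ha1 hM e κ hκ hmom
end

section
/- Consider the linear MRNNF recursion in one dimension: y_t = w_{zh} h_t + w_{zm} m_t + ε_t, h_t = w_{hh} h_{t-1} + w_{hx} x_t, m_t = w_{mm} m_{t-1} + w_{mf} Σ_{j=1}^∞ w_j(d) x_{t-j+1}, with |w_{hh}| < 1, |w_{mm}| < 1, w_{zm} w_{mf} ≠ 0, and d ∈ (0, 1/2). Writing y_t = Σ_{k=0}^∞ A_k x_{t-k} + ε_t, one has A_k = w_{zh} w_{hx} w_{hh}^k + w_{zm} w_{mf} Σ_{i=0}^{k} w_{mm}^i w_{k-i+1}(d), and A_k ∼ c · k^{-d-1} as k → ∞ for some nonzero constant c; in particular A_k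 decays polynomially, not exponentially. -/
open Filter

/-- Fractional differencing weights: product form. -/
noncomputable def fracWeight (d : ℝ) (j : ℕ) : ℝ :=
  ∏ i ∈ Finset.range j, ((i : ℝ) - d) / ((i : ℝ) + 1)

/-- Impulse-response coefficients of the scalar linear MRNNF:
`A_k = w_zh w_hx w_hh^k + w_zm w_mf Σ_{j=0}^{k} w_mm^j w_{k-j+1}(d)`. -/
noncomputable def mrnnfCoeff (wzh whx whh wzm wmf wmm d : ℝ) (k : ℕ) : ℝ :=
  wzh * whx * whh ^ k +
    wzm * wmf * ∑ j ∈ Finset.range (k + 1), wmm ^ j * fracWeight d (k - j + 1)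

open Topology
open Filter Finset

lemma prod_sub_ne_zero {d : ℝ} (hd0 : 0 < d) (hd1 : d < 1) (n : ℕ) :
    (∏ i ∈ Finset.range n, ((i : ℝ) - d)) ≠ 0 := by
  refine Finset.prod_ne_zero_iff.2 fun i _ => ?_
  rcases Nat.eq_zero_or_pos i with rfl | hi
  · simp only [Nat.cast_zero, zero_sub, neg_ne_zero]; exact ne_of_gt hd0
  · have : (1:ℝ) ≤ i := by exact_mod_cast hi
    nlinarith

lemma fracWeight_key {d : ℝ} (hd0 : 0 < d) (hd1 : d < 1) {n : ℕ} (hn : 1 ≤ n) :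
    fracWeight d n * (n : ℝ) ^ (d + 1 : ℝ)
      = ((n : ℝ) / ((n : ℝ) - d)) * (Real.GammaSeq (-d) n)⁻¹ := by
  have hn0 : (0:ℝ) < n := by exact_mod_cast hn
  have hP : (∏ j ∈ Finset.range (n+1), (-d + (j:ℝ)))
      = (∏ i ∈ Finset.range n, ((i : ℝ) - d)) * ((n:ℝ) - d) := by
    rw [Finset.prod_range_succ]
    congr 1
    · exact Finset.prod_congr rfl fun i _ => by ring
    · ring
  have hfw : fracWeight d n = (∏ i ∈ Finset.range n, ((i : ℝ) - d)) / (Nat.factorial n : ℝ) := by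
    rw [fracWeight, Finset.prod_div_distrib]
    congr 1
    have := Finset.prod_range_add_one_eq_factorial n
    exact_mod_cast this
  have hPn := prod_sub_ne_zero hd0 hd1 n
  have h1n : (1:ℝ) ≤ n := by exact_mod_cast hn
  have hnd : (n:ℝ) - d ≠ 0 := by intro h; nlinarith
  have hfact : (Nat.factorial n : ℝ) ≠ 0 := by exact_mod_cast Nat.factorial_ne_zero n
  have hrpow : (n:ℝ) ^ (d + 1 : ℝ) * (n:ℝ) ^ (-d : ℝ) = (n:ℝ) := by
    rw [← Real.rpow_add hn0]
    norm_num
  have hrne : (n:ℝ) ^ (-d : ℝ) ≠ 0 := (Real.rpow_pos_of_pos hn0 _).ne'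
  rw [hfw, Real.GammaSeq, hP]
  field_simp
  linear_combination hrpow
open Topology

lemma ratio_tendsto_one (a : ℝ) :
    Tendsto (fun k : ℕ => (k:ℝ) / ((k:ℝ) + a)) atTop (𝓝 1) := by
  have h0 : Tendsto (fun k : ℕ => a / (k:ℝ)) atTop (𝓝 0) :=
    tendsto_const_nhds.div_atTop tendsto_natCast_atTop_atTop
  have h1 : Tendsto (fun k : ℕ => (1 + a / (k:ℝ))⁻¹) atTop (𝓝 1) := by
    have := ((tendsto_const_nhds.add h0).inv₀ (by norm_num : (1:ℝ) + 0 ≠ 0))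
    simpa using this
  refine h1.congr' ?_
  filter_upwards [eventually_gt_atTop (Nat.ceil |a|)] with k hk
  have hk0 : (0:ℝ) < (k:ℝ) := by
    have : (0:ℕ) < k := lt_of_le_of_lt (Nat.zero_le _) hk
    exact_mod_cast this
  have hka : |a| < (k:ℝ) := lt_of_le_of_lt (Nat.le_ceil _) (by exact_mod_cast hk)
  have hka0 : (k:ℝ) + a ≠ 0 := by
    have := neg_abs_le a
    intro h; nlinarith
  field_simp

lemma fracWeight_mul_tendsto {d : ℝ} (hd0 : 0 < d) (hd1 : d < 1) :
    Tendsto (fun n : ℕ => fracWeight d n * (n : ℝ) ^ (d + 1 : ℝ)) atTop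
      (𝓝 (Real.Gamma (-d))⁻¹) := by
  have hGne : Real.Gamma (-d) ≠ 0 := by
    apply Real.Gamma_ne_zero
    intro m
    rcases Nat.eq_zero_or_pos m with rfl | hm
    · simpa using hd0.ne'
    · have : (1:ℝ) ≤ m := by exact_mod_cast hm
      intro h; rw [neg_eq_iff_eq_neg] at h; nlinarith [h]
  have hG : Tendsto (fun n => (Real.GammaSeq (-d) n)⁻¹) atTop (𝓝 (Real.Gamma (-d))⁻¹) :=
    (Real.GammaSeq_tendsto_Gamma (-d)).inv₀ hGne
  have hr : Tendsto (fun n : ℕ => (n:ℝ) / ((n:ℝ) + (-d))) atTop (𝓝 1) := ratio_tendsto_one (-d)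
  have := (hr.mul hG)
  rw [one_mul] at this
  refine this.congr' ?_
  filter_upwards [eventually_ge_atTop 1] with n hn
  rw [fracWeight_key hd0 hd1 hn]
  ring_nf

lemma fracWeight_abs_le_one {d : ℝ} (hd0 : 0 < d) (hd1 : d < 1) (n : ℕ) :
    |fracWeight d n| ≤ 1 := by
  induction n with
  | zero => simp [fracWeight]
  | succ n ih =>
    rw [fracWeight, Finset.prod_range_succ, ← fracWeight, abs_mul]
    have h1 : |((n:ℝ) - d) / ((n:ℝ) + 1)| ≤ 1 := by
      rw [abs_div]
      have hn1 : (0:ℝ) < (n:ℝ) + 1 := by positivity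
      rw [abs_of_pos hn1, div_le_one hn1, abs_le]
      constructor <;> nlinarith [Nat.cast_nonneg (α := ℝ) n]
    calc |fracWeight d n| * |((n:ℝ) - d) / ((n:ℝ) + 1)| ≤ 1 * 1 :=
          mul_le_mul ih h1 (abs_nonneg _) zero_le_one
      _ = 1 := by norm_num

lemma rpow_le_sq {d : ℝ} (hd0 : 0 < d) (hd1 : d < 1) (k : ℕ) : (k:ℝ) ^ (d + 1 : ℝ) ≤ (k:ℝ) ^ 2 := by
  rcases Nat.eq_zero_or_pos k with rfl | hk
  · rw [Nat.cast_zero, Real.zero_rpow (by positivity)]; positivity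
  · have h1 : (1:ℝ) ≤ (k:ℝ) := by exact_mod_cast hk
    calc (k:ℝ) ^ (d + 1 : ℝ) ≤ (k:ℝ) ^ (2:ℝ) :=
          Real.rpow_le_rpow_of_exponent_le h1 (by linarith)
      _ = (k:ℝ) ^ 2 := by rw [show (2:ℝ) = ((2:ℕ):ℝ) by norm_num, Real.rpow_natCast]

lemma rpow_mul_geo_tendsto_zero {d r : ℝ} (hd0 : 0 < d) (hd1 : d < 1) (hr : |r| < 1) :
    Tendsto (fun k : ℕ => (k:ℝ) ^ (d + 1 : ℝ) * r ^ k) atTop (𝓝 0) := by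
  have hb : Tendsto (fun k : ℕ => (k:ℝ) ^ 2 * |r| ^ k) atTop (𝓝 0) := by
    have := (summable_pow_mul_geometric_of_norm_lt_one (R := ℝ) 2 (r := |r|)
      (by simpa using hr)).tendsto_atTop_zero
    simpa using this
  refine squeeze_zero_norm (fun k => ?_) hb
  rw [norm_mul, Real.norm_rpow_of_nonneg (Nat.cast_nonneg k), norm_pow]
  have h2 : (0:ℝ) ≤ |r| ^ k := by positivity
  calc ‖(k:ℝ)‖ ^ (d + 1 : ℝ) * ‖r‖ ^ k = (k:ℝ) ^ (d + 1 : ℝ) * |r| ^ k := by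
        rw [Real.norm_natCast, Real.norm_eq_abs]
    _ ≤ (k:ℝ) ^ 2 * |r| ^ k := mul_le_mul_of_nonneg_right (rpow_le_sq hd0 hd1 k) h2

lemma conv_tendsto {d wmm : ℝ} (hd0 : 0 < d) (hd1 : d < 1) (hwmm : |wmm| < 1) :
    Tendsto (fun k : ℕ =>
        (∑ j ∈ Finset.range (k+1), wmm ^ j * fracWeight d (k-j+1)) * (k:ℝ) ^ (d+1:ℝ))
      atTop (𝓝 ((1 - wmm)⁻¹ * (Real.Gamma (-d))⁻¹)) := by
  set L : ℝ := (Real.Gamma (-d))⁻¹ with hL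
  -- bound on |fracWeight d n * n^(d+1)|
  obtain ⟨B, hB⟩ := ((fracWeight_mul_tendsto hd0 hd1).abs).bddAbove_range
  have hBle : ∀ n : ℕ, |fracWeight d n * (n:ℝ) ^ (d+1:ℝ)| ≤ B := fun n => hB ⟨n, rfl⟩
  have hB0 : 0 ≤ B := le_trans (abs_nonneg _) (hBle 0)
  set g : ℕ → ℕ → ℝ := fun k j =>
    if j ≤ k then wmm ^ j * (fracWeight d (k-j+1) * (k:ℝ) ^ (d+1:ℝ)) else 0 with hg
  have hsum_eq : ∀ k : ℕ,
      (∑ j ∈ Finset.range (k+1), wmm ^ j * fracWeight d (k-j+1)) * (k:ℝ) ^ (d+1:ℝ)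
        = ∑' j, g k j := by
    intro k
    rw [tsum_eq_sum (s := Finset.range (k+1))
      (fun j hj => by
        simp only [Finset.mem_range, not_lt] at hj
        simp only [hg]
        rw [if_neg (by omega : ¬ j ≤ k)])]
    rw [Finset.sum_mul]
    refine Finset.sum_congr rfl fun j hj => ?_
    rw [Finset.mem_range] at hj
    rw [hg]; simp only [if_pos (by omega : j ≤ k)]; ring
  set bound : ℕ → ℝ := fun j =>
    (2:ℝ) ^ (d+1:ℝ) * (B + (j:ℝ) ^ (d+1:ℝ)) * |wmm| ^ j with hbd
  have hbound_sum : Summable bound := by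
    have h1 : Summable (fun j : ℕ => (j:ℝ) ^ (d+1:ℝ) * |wmm| ^ j) := by
      refine Summable.of_nonneg_of_le (fun j => by positivity)
        (fun j => mul_le_mul_of_nonneg_right (rpow_le_sq hd0 hd1 j) (by positivity)) ?_
      simpa using summable_pow_mul_geometric_of_norm_lt_one (R := ℝ) 2 (r := |wmm|)
        (by simpa using hwmm)
    have h2 : Summable (fun j : ℕ => B * |wmm| ^ j) :=
      (summable_geometric_of_lt_one (abs_nonneg _) hwmm).mul_left B
    have := ((h2.add h1).mul_left ((2:ℝ) ^ (d+1:ℝ)))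
    refine this.congr fun j => ?_
    rw [hbd]; ring
  have hbound : ∀ k j, ‖g k j‖ ≤ bound j := by
    intro k j
    rw [hg, hbd]
    by_cases hjk : j ≤ k
    · simp only [if_pos hjk]
      set m : ℕ := k - j + 1 with hm
      have hm1 : 1 ≤ m := by omega
      have hkm : (k:ℝ) ≤ (m:ℝ) + (j:ℝ) := by
        have : k ≤ m + j := by omega
        exact_mod_cast le_trans this (le_refl _)
      have hk_rpow : (k:ℝ) ^ (d+1:ℝ) ≤ ((m:ℝ) + (j:ℝ)) ^ (d+1:ℝ) :=
        Real.rpow_le_rpow (Nat.cast_nonneg k) hkm (by linarith)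
      have key : |fracWeight d m| * (k:ℝ) ^ (d+1:ℝ)
          ≤ (2:ℝ) ^ (d+1:ℝ) * (B + (j:ℝ) ^ (d+1:ℝ)) := by
        rcases le_total ((j:ℝ)) ((m:ℝ)) with hc | hc
        · have h2m : ((m:ℝ) + (j:ℝ)) ^ (d+1:ℝ) ≤ (2:ℝ) ^ (d+1:ℝ) * (m:ℝ) ^ (d+1:ℝ) := by
            rw [← Real.mul_rpow (by norm_num) (Nat.cast_nonneg m)]
            exact Real.rpow_le_rpow (by positivity) (by linarith) (by linarith)
          have hfm : |fracWeight d m| * (m:ℝ) ^ (d+1:ℝ) ≤ B := by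
            have := hBle m
            rwa [abs_mul, abs_of_nonneg (by positivity : (0:ℝ) ≤ (m:ℝ) ^ (d+1:ℝ))] at this
          calc |fracWeight d m| * (k:ℝ) ^ (d+1:ℝ)
              ≤ |fracWeight d m| * ((2:ℝ) ^ (d+1:ℝ) * (m:ℝ) ^ (d+1:ℝ)) := by
                refine mul_le_mul_of_nonneg_left (le_trans hk_rpow h2m) (abs_nonneg _)
            _ = (2:ℝ) ^ (d+1:ℝ) * (|fracWeight d m| * (m:ℝ) ^ (d+1:ℝ)) := by ring
            _ ≤ (2:ℝ) ^ (d+1:ℝ) * B := by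
                exact mul_le_mul_of_nonneg_left hfm (by positivity)
            _ ≤ (2:ℝ) ^ (d+1:ℝ) * (B + (j:ℝ) ^ (d+1:ℝ)) := by
                have : (0:ℝ) ≤ (j:ℝ) ^ (d+1:ℝ) := by positivity
                nlinarith [Real.rpow_pos_of_pos (by norm_num : (0:ℝ) < 2) (d+1)]
        · have h2j : ((m:ℝ) + (j:ℝ)) ^ (d+1:ℝ) ≤ (2:ℝ) ^ (d+1:ℝ) * (j:ℝ) ^ (d+1:ℝ) := by
            rw [← Real.mul_rpow (by norm_num) (Nat.cast_nonneg j)]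
            exact Real.rpow_le_rpow (by positivity) (by linarith) (by linarith)
          calc |fracWeight d m| * (k:ℝ) ^ (d+1:ℝ)
              ≤ 1 * ((2:ℝ) ^ (d+1:ℝ) * (j:ℝ) ^ (d+1:ℝ)) := by
                refine mul_le_mul (fracWeight_abs_le_one hd0 hd1 m)
                  (le_trans hk_rpow h2j) (by positivity) (by norm_num)
            _ ≤ (2:ℝ) ^ (d+1:ℝ) * (B + (j:ℝ) ^ (d+1:ℝ)) := by
                have h2p : (0:ℝ) < (2:ℝ) ^ (d+1:ℝ) :=
                  Real.rpow_pos_of_pos (by norm_num) _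
                nlinarith
      calc ‖wmm ^ j * (fracWeight d m * (k:ℝ) ^ (d+1:ℝ))‖
          = |wmm| ^ j * (|fracWeight d m| * (k:ℝ) ^ (d+1:ℝ)) := by
            rw [Real.norm_eq_abs, abs_mul, abs_mul, abs_pow,
              abs_of_nonneg (by positivity : (0:ℝ) ≤ (k:ℝ) ^ (d+1:ℝ))]
        _ ≤ |wmm| ^ j * ((2:ℝ) ^ (d+1:ℝ) * (B + (j:ℝ) ^ (d+1:ℝ))) :=
            mul_le_mul_of_nonneg_left key (by positivity)
        _ = (2:ℝ) ^ (d+1:ℝ) * (B + (j:ℝ) ^ (d+1:ℝ)) * |wmm| ^ j := by ring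
    · simp only [if_neg hjk, norm_zero]
      positivity
  have hpt : ∀ j : ℕ, Tendsto (fun k => g k j) atTop (𝓝 (wmm ^ j * L)) := by
    intro j
    have hsub : Tendsto (fun k : ℕ => k - j + 1) atTop atTop :=
      (tendsto_add_atTop_nat 1).comp (tendsto_sub_atTop_nat j)
    have ht : Tendsto (fun k : ℕ =>
        fracWeight d (k-j+1) * ((k-j+1 : ℕ):ℝ) ^ (d+1:ℝ)) atTop (𝓝 L) :=
      (fracWeight_mul_tendsto hd0 hd1).comp hsub
    have hrr : Tendsto (fun k : ℕ => (k:ℝ) / (((k-j+1 : ℕ)):ℝ)) atTop (𝓝 1) := by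
      refine (ratio_tendsto_one (1 - (j:ℝ))).congr' ?_
      filter_upwards [eventually_ge_atTop j] with k hk
      congr 1
      push_cast [Nat.cast_sub hk]
      ring
    have hrpowr : Tendsto (fun k : ℕ => ((k:ℝ) / (((k-j+1 : ℕ)):ℝ)) ^ (d+1:ℝ))
        atTop (𝓝 1) := by
      have hcont := (Real.continuousAt_rpow_const 1 (d+1) (Or.inl one_ne_zero)).tendsto
      have := hcont.comp hrr
      simpa [Function.comp_def] using this
    have hmain := (tendsto_const_nhds (x := wmm ^ j) (f := atTop (α := ℕ))).mul
      (ht.mul hrpowr)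
    rw [mul_one] at hmain
    refine (hmain.congr' ?_ : Tendsto (fun k => g k j) atTop (𝓝 (wmm ^ j * L)))
    filter_upwards [eventually_ge_atTop j] with k hk
    rw [hg]
    simp only [if_pos (by omega : j ≤ k)]
    have hm0 : (0:ℝ) < ((k-j+1 : ℕ):ℝ) := by exact_mod_cast (by omega : 0 < k - j + 1)
    have hmne : (((k-j+1:ℕ)):ℝ) ^ (d+1:ℝ) ≠ 0 := (Real.rpow_pos_of_pos hm0 _).ne'
    rw [Real.div_rpow (Nat.cast_nonneg k) hm0.le]
    have hcan : (k:ℝ) ^ (d+1:ℝ) / ((k-j+1:ℕ):ℝ) ^ (d+1:ℝ) * ((k-j+1:ℕ):ℝ) ^ (d+1:ℝ)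
        = (k:ℝ) ^ (d+1:ℝ) := div_mul_cancel₀ _ hmne
    linear_combination (wmm ^ j * fracWeight d (k-j+1)) * hcan
  have := tendsto_tsum_of_dominated_convergence hbound_sum hpt
    (Filter.Eventually.of_forall hbound)
  have htsum : ∑' j, wmm ^ j * L = (1 - wmm)⁻¹ * L := by
    rw [tsum_mul_right, tsum_geometric_of_abs_lt_one hwmm]
  rw [htsum] at this
  exact this.congr fun k => (hsum_eq k).symm

/-- for the scalar linear MRNNF with `|w_hh| < 1`, `|w_mm| < 1`,
`w_zm w_mf ≠ 0` and `d ∈ (0,1/2)`, the impulse-response coefficients satisfy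
`A_k ∼ c k^{-d-1}` for some nonzero constant `c`; in particular they decay
polynomially, not exponentially. -/
theorem mrnnf_long_memory (wzh whx whh wzm wmf wmm d : ℝ)
    (hwhh : |whh| < 1) (hwmm : |wmm| < 1) (hzm : wzm * wmf ≠ 0)
    (hd0 : 0 < d) (hd1 : d < 1 / 2) :
    ∃ c : ℝ, c ≠ 0 ∧
      Tendsto (fun k : ℕ =>
          mrnnfCoeff wzh whx whh wzm wmf wmm d k / (k : ℝ) ^ (-d - 1)) atTop (nhds c) ∧
      ∀ ρ : ℝ, 0 < ρ → ρ < 1 → ∀ C : ℝ,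
        ¬ (∀ k : ℕ, |mrnnfCoeff wzh whx whh wzm wmf wmm d k| ≤ C * ρ ^ k) := by
  have hd1' : d < 1 := by linarith
  have hGne : Real.Gamma (-d) ≠ 0 := by
    apply Real.Gamma_ne_zero
    intro m
    rcases Nat.eq_zero_or_pos m with rfl | hm
    · simpa using hd0.ne'
    · have : (1:ℝ) ≤ m := by exact_mod_cast hm
      intro h; rw [neg_eq_iff_eq_neg] at h; nlinarith [h]
  have hwm1 : (1:ℝ) - wmm ≠ 0 := by
    have := abs_lt.mp hwmm
    intro h; linarith [this.2]
  set c : ℝ := wzm * wmf * ((1 - wmm)⁻¹ * (Real.Gamma (-d))⁻¹) with hc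
  have hcne : c ≠ 0 :=
    mul_ne_zero hzm (mul_ne_zero (inv_ne_zero hwm1) (inv_ne_zero hGne))
  have h1 := (rpow_mul_geo_tendsto_zero hd0 hd1' hwhh).const_mul (wzh * whx)
  have h2 := (conv_tendsto hd0 hd1' hwmm).const_mul (wzm * wmf)
  have hA : Tendsto (fun k : ℕ =>
      mrnnfCoeff wzh whx whh wzm wmf wmm d k * (k:ℝ) ^ (d+1:ℝ)) atTop (𝓝 c) := by
    have h3 := h1.add h2
    rw [mul_zero, zero_add] at h3
    refine h3.congr fun k => ?_
    rw [mrnnfCoeff]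
    ring
  have hdiv : ∀ k : ℕ, mrnnfCoeff wzh whx whh wzm wmf wmm d k / (k:ℝ) ^ (-d - 1 : ℝ)
      = mrnnfCoeff wzh whx whh wzm wmf wmm d k * (k:ℝ) ^ (d+1:ℝ) := by
    intro k
    rw [show (-d - 1 : ℝ) = -(d+1) by ring, Real.rpow_neg (Nat.cast_nonneg k)]
    rw [div_inv_eq_mul]
  refine ⟨c, hcne, hA.congr fun k => (hdiv k).symm, ?_⟩
  intro ρ hρ0 hρ1 C hC
  have hC0 : (0:ℝ) ≤ C := le_trans (abs_nonneg _) (by simpa using hC 0)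
  have hzero : Tendsto (fun k : ℕ =>
      |mrnnfCoeff wzh whx whh wzm wmf wmm d k * (k:ℝ) ^ (d+1:ℝ)|) atTop (𝓝 0) := by
    have hb : Tendsto (fun k : ℕ => C * ((k:ℝ) ^ (d+1:ℝ) * ρ ^ k)) atTop (𝓝 (C * 0)) :=
      (rpow_mul_geo_tendsto_zero hd0 hd1' (by rwa [abs_of_pos hρ0])).const_mul C
    rw [mul_zero] at hb
    refine squeeze_zero (fun k => abs_nonneg _) (fun k => ?_) hb
    have hk : (0:ℝ) ≤ (k:ℝ) ^ (d+1:ℝ) := Real.rpow_nonneg (Nat.cast_nonneg k) _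
    calc |mrnnfCoeff wzh whx whh wzm wmf wmm d k * (k:ℝ) ^ (d+1:ℝ)|
        = |mrnnfCoeff wzh whx whh wzm wmf wmm d k| * (k:ℝ) ^ (d+1:ℝ) := by
          rw [abs_mul, abs_of_nonneg hk]
      _ ≤ (C * ρ ^ k) * (k:ℝ) ^ (d+1:ℝ) := mul_le_mul_of_nonneg_right (hC k) hk
      _ = C * ((k:ℝ) ^ (d+1:ℝ) * ρ ^ k) := by ring
  have := tendsto_nhds_unique hA.abs hzero
  exact hcne (abs_eq_zero.mp this)
end
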